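/- Let (M⁴, g) be a 4-dimensional Riemannian manifold and p a point at which, for some orthonormal frame {e_1, e_2, e_3, e_4}, the Weyl tensor satisfies W(e_i, e_j, e_k, e_1) = 0 for all i, j, k. Then W vanishes entirely at p. -/
import Mathlib


/-!
An abstract index-notation model of a Riemannian manifold, expressed in a
global orthonormal frame: tensors are component functions indexed by `Fin n`,
and `D0, …, D5` denote the covariant derivative operators acting on scalar
fields and on 1-,…,5-tensor fields respectively.
-/

noncomputable section
open scoped BigOperators

/-- Kronecker delta: the components `g_{ij}` of the metric in an orthonormal frame. -/
def gK {n : ℕ} (i j : Fin n) : ℝ := if i = j then 1 else 0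

/-- The data of a Riemannian manifold `(M, g)` together with a potential function `f`,
in an orthonormal frame: the Riemann curvature tensor `R_{ijkl}` (with its standard
symmetries) and the covariant derivative operators `Dk` on `k`-tensor fields
(the first index of the result being the derivative index). -/
structure GeomData (n : ℕ) (M : Type*) where
  /-- the potential function -/
  f : M → ℝ
  /-- the Riemann curvature tensor `R_{ijkl}` -/
  Riem : M → Fin n → Fin n → Fin n → Fin n → ℝ
  /-- covariant derivative (gradient components) of a scalar field -/
  D0 : (M → ℝ) → M → Fin n → ℝ
  /-- covariant derivative of a 1-tensor field -/
  D1 : (M → Fin n → ℝ) → M → Fin n → Fin n → ℝ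
  /-- covariant derivative of a 2-tensor field -/
  D2 : (M → Fin n → Fin n → ℝ) → M → Fin n → Fin n → Fin n → ℝ
  /-- covariant derivative of a 3-tensor field -/
  D3 : (M → Fin n → Fin n → Fin n → ℝ) → M → Fin n → Fin n → Fin n → Fin n → ℝ
  /-- covariant derivative of a 4-tensor field -/
  D4 : (M → Fin n → Fin n → Fin n → Fin n → ℝ) →
      M → Fin n → Fin n → Fin n → Fin n → Fin n → ℝ
  /-- covariant derivative of a 5-tensor field -/
  D5 : (M → Fin n → Fin n → Fin n → Fin n → Fin n → ℝ) →
      M → Fin n → Fin n → Fin n → Fin n → Fin n → Fin n → ℝ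
  Riem_antisym₁ : ∀ x i j k l, Riem x j i k l = - Riem x i j k l
  Riem_antisym₂ : ∀ x i j k l, Riem x i j l k = - Riem x i j k l
  Riem_pairSym : ∀ x i j k l, Riem x k l i j = Riem x i j k l
  Riem_bianchi : ∀ x i j k l, Riem x i j k l + Riem x j k i l + Riem x k i j l = 0
  D0_add : ∀ u v : M → ℝ, D0 (fun x => u x + v x) = fun x i => D0 u x i + D0 v x i
  D0_mul : ∀ u v : M → ℝ,
      D0 (fun x => u x * v x) = fun x i => u x * D0 v x i + v x * D0 u x i
  D0_const : ∀ c : ℝ, D0 (fun _ => c) = fun _ _ => 0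

namespace GeomData

variable {n : ℕ} {M : Type*} (G : GeomData n M)

/-- Ricci tensor `R_{jk}` (trace of the Riemann tensor). -/
def Ric : M → Fin n → Fin n → ℝ := fun x j k => ∑ i, G.Riem x j i k i

/-- Scalar curvature `R`. -/
def scal : M → ℝ := fun x => ∑ i, G.Ric x i i

/-- Components `∇_i f` of the gradient of the potential function. -/
def gradf : M → Fin n → ℝ := G.D0 G.f

/-- Hessian `∇_i ∇_j f` of the potential function. -/
def hessf : M → Fin n → Fin n → ℝ := G.D1 G.gradf

/-- Laplacian `Δ f`. -/
def lapf : M → ℝ := fun x => ∑ i, G.hessf x i i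

/-- `|∇ f|²`. -/
def gradNormSq : M → ℝ := fun x => ∑ i, (G.gradf x i) ^ 2

/-- The Miao–Tam critical metric equation `-(Δf) g + Hess f - f Ric = g`. -/
def MiaoTamEq : Prop :=
  ∀ x i j, -(G.lapf x) * gK i j + G.hessf x i j - G.f x * G.Ric x i j = gK i j

/-- Constancy of the scalar curvature. -/
def ConstScal : Prop := ∀ x y, G.scal x = G.scal y

/-- `(M, g, f)` is a Miao–Tam critical metric: the Miao–Tam equation holds
(together with the symmetry of the Hessian and the constancy of the scalar
curvature, which such metrics always possess). -/
def IsMiaoTam : Prop :=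
  G.MiaoTamEq ∧ G.ConstScal ∧ ∀ x i j, G.hessf x i j = G.hessf x j i

/-- Covariant derivative of the Ricci tensor, `∇_i R_{jk}`. -/
def dRic : M → Fin n → Fin n → Fin n → ℝ := G.D2 G.Ric

/-- The Cotton tensor `C_{ijk}`. -/
def Cotton : M → Fin n → Fin n → Fin n → ℝ := fun x i j k =>
  G.dRic x i j k - G.dRic x j i k
    - (1 / (2 * ((n : ℝ) - 1))) *
        (G.D0 G.scal x i * gK j k - G.D0 G.scal x j * gK i k)

/-- The Weyl tensor `W_{ijkl}`. -/
def Weyl : M → Fin n → Fin n → Fin n → Fin n → ℝ := fun x i j k l =>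
  G.Riem x i j k l
    - (1 / ((n : ℝ) - 2)) *
        (G.Ric x i k * gK j l + G.Ric x j l * gK i k
          - G.Ric x i l * gK j k - G.Ric x j k * gK i l)
    + (G.scal x / (((n : ℝ) - 1) * ((n : ℝ) - 2))) *
        (gK j l * gK i k - gK i l * gK j k)

/-- The auxiliary covariant 3-tensor `T_{ijk}`. -/
def T : M → Fin n → Fin n → Fin n → ℝ := fun x i j k =>
  (((n : ℝ) - 1) / ((n : ℝ) - 2)) *
      (G.Ric x i k * G.gradf x j - G.Ric x j k * G.gradf x i)
    - (G.scal x / ((n : ℝ) - 2)) * (gK i k * G.gradf x j - gK j k * G.gradf x i)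
    + (1 / ((n : ℝ) - 2)) *
        (gK i k * (∑ s, G.Ric x j s * G.gradf x s)
          - gK j k * (∑ s, G.Ric x i s * G.gradf x s))

/-- The function `ρ = |∇f|² + 2f/(n-1) + R f²/(n-1)`. -/
def rho : M → ℝ := fun x =>
  G.gradNormSq x + (2 / ((n : ℝ) - 1)) * G.f x
    + (G.scal x / ((n : ℝ) - 1)) * (G.f x) ^ 2

/-- Unit normal `ν = ∇f/|∇f|` to a regular level set of `f`. -/
def nu : M → Fin n → ℝ := fun x i => G.gradf x i / Real.sqrt (G.gradNormSq x)

/-- The induced metric of a regular level set of `f`, extended to the ambient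
frame as the orthogonal projection `g_{ij} - ν_i ν_j` onto its tangent space. -/
def proj : M → Fin n → Fin n → ℝ := fun x i j => gK i j - G.nu x i * G.nu x j

/-- Second fundamental form `h_{ab} = -⟨∇_{e_a} ν, e_b⟩` of a regular level set
of `f` with respect to `ν = ∇f/|∇f|`, extended to the ambient frame
(for level sets it is given by `-Hess f(PX, PY)/|∇f|` with `P` the tangential
projection). -/
def sff : M → Fin n → Fin n → ℝ := fun x i j =>
  -(1 / Real.sqrt (G.gradNormSq x)) *
    ∑ k, ∑ l, G.proj x i k * G.proj x j l * G.hessf x k l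

/-- Mean curvature `H` of a regular level set of `f`. -/
def meanCurv : M → ℝ := fun x => ∑ i, G.sff x i i

/-- The Bach tensor for `n ≥ 4`:
`B_{ij} = (∇^k ∇^l W_{ikjl})/(n-3) + (R_{kl} W_i{}^k{}_j{}^l)/(n-2)`. -/
def Bach : M → Fin n → Fin n → ℝ := fun x i j =>
  (1 / ((n : ℝ) - 3)) * (∑ k, ∑ l, G.D5 (G.D4 G.Weyl) x k l i k j l)
    + (1 / ((n : ℝ) - 2)) * (∑ k, ∑ l, G.Ric x k l * G.Weyl x i k j l)

/-- The Bach tensor in dimension 3: `B_{ij} = ∇^k C_{kij}`. -/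
def Bach3 : M → Fin n → Fin n → ℝ := fun x i j => ∑ k, G.D3 G.Cotton x k k i j

/-- Divergence `(div B)_j = ∇_i B_{ij}` of the 3-dimensional Bach tensor. -/
def divBach3 : M → Fin n → ℝ := fun x j => ∑ i, G.D2 G.Bach3 x i i j

/-- The Riemann curvature 4-tensor evaluated on vectors (given by components). -/
def riemApp (x : M) (u v w z : Fin n → ℝ) : ℝ :=
  ∑ i, ∑ j, ∑ k, ∑ l, u i * v j * w k * z l * G.Riem x i j k l

/-- The Ricci tensor evaluated on vectors (given by components). -/
def ricApp (x : M) (u v : Fin n → ℝ) : ℝ := ∑ i, ∑ j, u i * v j * G.Ric x i j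

end GeomData


/-! ### Auxiliary lemmas -/

section WeylAux

open Matrix

lemma mygK_symm {n : ℕ} (i j : Fin n) : gK i j = gK j i := by
  simp [gK, eq_comm]

variable {M : Type*}

lemma myRic_symm {n : ℕ} (G : GeomData n M) (x : M) (i j : Fin n) :
    G.Ric x i j = G.Ric x j i := by
  show (∑ a, G.Riem x i a j a) = ∑ a, G.Riem x j a i a
  exact Finset.sum_congr rfl fun a _ => G.Riem_pairSym x j a i a

lemma myWeyl_antisym₁ {n : ℕ} (G : GeomData n M) (x : M) (i j k l : Fin n) :
    G.Weyl x j i k l = - G.Weyl x i j k l := by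
  simp only [GeomData.Weyl]
  linear_combination G.Riem_antisym₁ x i j k l

lemma myWeyl_antisym₂ {n : ℕ} (G : GeomData n M) (x : M) (i j k l : Fin n) :
    G.Weyl x i j l k = - G.Weyl x i j k l := by
  simp only [GeomData.Weyl]
  linear_combination G.Riem_antisym₂ x i j k l

lemma myWeyl_pairSym {n : ℕ} (G : GeomData n M) (x : M) (i j k l : Fin n) :
    G.Weyl x k l i j = G.Weyl x i j k l := by
  simp only [GeomData.Weyl]
  rw [G.Riem_pairSym x i j k l, myRic_symm G x k i, myRic_symm G x l j,
    myRic_symm G x k j, myRic_symm G x l i, mygK_symm l j, mygK_symm k i,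
    mygK_symm l i, mygK_symm k j]
  ring

/-- The Weyl tensor is trace-free in dimension 4. -/
lemma myWeyl_trace (G : GeomData 4 M) (x : M) (k l : Fin 4) :
    ∑ a, G.Weyl x a k a l = 0 := by
  have hsw : ∀ a b c d, G.Riem x a b c d = G.Riem x b a d c := by
    intro a b c d; rw [G.Riem_antisym₁, G.Riem_antisym₂]; ring
  have h1 : ∑ a, G.Riem x a k a l = G.Ric x k l := by
    rw [Finset.sum_congr rfl fun a _ => hsw a k a l]; rfl
  have e1 : ∑ a, G.Weyl x a k a l
      = (∑ a, G.Riem x a k a l)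
        - (1/2) * ((∑ a, G.Ric x a a) * gK k l + G.Ric x k l * (∑ a : Fin 4, gK a a)
            - (∑ a, G.Ric x a l * gK k a) - (∑ a, G.Ric x k a * gK a l))
        + (G.scal x / 6) * (gK k l * (∑ a : Fin 4, gK a a) - ∑ a, gK a l * gK k a) := by
    simp only [GeomData.Weyl, Fin.sum_univ_four]
    push_cast
    ring
  have h2 : ∑ a, G.Ric x a l * gK k a = G.Ric x k l := by simp [gK, mul_ite]
  have h3 : ∑ a, G.Ric x k a * gK a l = G.Ric x k l := by simp [gK, mul_ite]
  have h4 : ∑ a, gK a l * gK k a = gK k l := by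
    fin_cases k <;> fin_cases l <;> norm_num [gK, Fin.sum_univ_four]
  have h5 : (∑ a : Fin 4, gK a a) = 4 := by norm_num [gK, Fin.sum_univ_four]
  have h6 : (∑ a, G.Ric x a a) = G.scal x := rfl
  rw [e1, h1, h2, h3, h4, h5, h6]
  ring

/-- An algebraic curvature-type tensor on `ℝ⁴` which is trace-free and kills the
last basis direction in its fourth slot vanishes identically. -/
lemma weyl_core_algebra (W : Fin 4 → Fin 4 → Fin 4 → Fin 4 → ℝ)
    (ha1 : ∀ i j k l, W j i k l = -W i j k l)
    (ha2 : ∀ i j k l, W i j l k = -W i j k l)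
    (hp : ∀ i j k l, W k l i j = W i j k l)
    (ht : ∀ k l, W 0 k 0 l + W 1 k 1 l + W 2 k 2 l + W 3 k 3 l = 0)
    (h0 : ∀ i j k, W i j k 0 = 0) :
    ∀ i j k l, W i j k l = 0 := by
  have hc0 : ∀ a b c, W a b 0 c = 0 := by
    intro a b c; rw [ha2 a b c 0, h0 a b c]; ring
  have hcl : ∀ a b c, W 0 a b c = 0 := by
    intro a b c; rw [hp b c 0 a]; exact hc0 b c a
  have hc2 : ∀ a b c, W a 0 b c = 0 := by
    intro a b c; rw [ha1 0 a b c, hcl a b c]; ring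
  have hz : ∀ i j k l : Fin 4, (i = 0 ∨ j = 0 ∨ k = 0 ∨ l = 0 ∨ i = j ∨ k = l) →
      W i j k l = 0 := by
    intro i j k l h
    rcases h with rfl|rfl|rfl|rfl|rfl|rfl
    · exact hcl _ _ _
    · exact hc2 _ _ _
    · exact hc0 _ _ _
    · exact h0 _ _ _
    · have := ha1 i i k l; linarith
    · have := ha2 i j k k; linarith
  have w2121 : W 2 1 2 1 = W 1 2 1 2 := by rw [ha1 1 2 2 1, ha2 1 2 1 2]; ring
  have w3131 : W 3 1 3 1 = W 1 3 1 3 := by rw [ha1 1 3 3 1, ha2 1 3 1 3]; ring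
  have w3232 : W 3 2 3 2 = W 2 3 2 3 := by rw [ha1 2 3 3 2, ha2 2 3 2 3]; ring
  have q11 := ht 1 1; have q22 := ht 2 2; have q33 := ht 3 3
  have q12 := ht 1 2; have q13 := ht 1 3; have q23 := ht 2 3
  have z1 := hz 0 1 0 1 (by decide); have z2 := hz 1 1 1 1 (by decide)
  have z3 := hz 0 2 0 2 (by decide); have z4 := hz 2 2 2 2 (by decide)
  have z5 := hz 0 3 0 3 (by decide); have z6 := hz 3 3 3 3 (by decide)
  have z7 := hz 0 1 0 2 (by decide); have z8 := hz 1 1 1 2 (by decide)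
  have z9 := hz 2 1 2 2 (by decide)
  have z10 := hz 0 1 0 3 (by decide); have z11 := hz 1 1 1 3 (by decide)
  have z12 := hz 3 1 3 3 (by decide)
  have z13 := hz 0 2 0 3 (by decide); have z14 := hz 2 2 2 3 (by decide)
  have z15 := hz 3 2 3 3 (by decide)
  have b1212 : W 1 2 1 2 = 0 := by linarith
  have b1313 : W 1 3 1 3 = 0 := by linarith
  have b2323 : W 2 3 2 3 = 0 := by linarith
  have e3132 : W 3 1 3 2 = 0 := by linarith
  have e2123 : W 2 1 2 3 = 0 := by linarith
  have b1213 : W 1 2 1 3 = 0 := by linarith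
  have b1223 : W 1 2 2 3 = 0 := by
    have h := ha1 2 1 2 3; rw [e2123] at h; linarith
  have b1323 : W 1 3 2 3 = 0 := by
    have h1 := ha1 3 1 2 3
    have h2 := ha2 3 1 3 2
    rw [e3132] at h2; linarith
  have hfin : ∀ m : Fin 4, m = 0 ∨ m = 1 ∨ m = 2 ∨ m = 3 := by decide
  intro i j k l
  rcases hfin i with rfl|rfl|rfl|rfl <;> rcases hfin j with rfl|rfl|rfl|rfl <;>
    rcases hfin k with rfl|rfl|rfl|rfl <;> rcases hfin l with rfl|rfl|rfl|rfl
  · exact hz _ _ _ _ (by decide)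
  · exact hz _ _ _ _ (by decide)
  · exact hz _ _ _ _ (by decide)
  · exact hz _ _ _ _ (by decide)
  · exact hz _ _ _ _ (by decide)
  · exact hz _ _ _ _ (by decide)
  · exact hz _ _ _ _ (by decide)
  · exact hz _ _ _ _ (by decide)
  · exact hz _ _ _ _ (by decide)
  · exact hz _ _ _ _ (by decide)
  · exact hz _ _ _ _ (by decide)
  · exact hz _ _ _ _ (by decide)
  · exact hz _ _ _ _ (by decide)
  · exact hz _ _ _ _ (by decide)
  · exact hz _ _ _ _ (by decide)
  · exact hz _ _ _ _ (by decide)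
  · exact hz _ _ _ _ (by decide)
  · exact hz _ _ _ _ (by decide)
  · exact hz _ _ _ _ (by decide)
  · exact hz _ _ _ _ (by decide)
  · exact hz _ _ _ _ (by decide)
  · exact hz _ _ _ _ (by decide)
  · exact hz _ _ _ _ (by decide)
  · exact hz _ _ _ _ (by decide)
  · exact hz _ _ _ _ (by decide)
  · exact hz _ _ _ _ (by decide)
  · exact hz _ _ _ _ (by decide)
  · exact hz _ _ _ _ (by decide)
  · exact hz _ _ _ _ (by decide)
  · exact hz _ _ _ _ (by decide)
  · exact hz _ _ _ _ (by decide)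
  · exact hz _ _ _ _ (by decide)
  · exact hz _ _ _ _ (by decide)
  · exact hz _ _ _ _ (by decide)
  · exact hz _ _ _ _ (by decide)
  · exact hz _ _ _ _ (by decide)
  · exact hz _ _ _ _ (by decide)
  · exact hz _ _ _ _ (by decide)
  · exact hz _ _ _ _ (by decide)
  · exact hz _ _ _ _ (by decide)
  · exact hz _ _ _ _ (by decide)
  · exact hz _ _ _ _ (by decide)
  · exact hz _ _ _ _ (by decide)
  · exact hz _ _ _ _ (by decide)
  · exact hz _ _ _ _ (by decide)
  · exact hz _ _ _ _ (by decide)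
  · exact hz _ _ _ _ (by decide)
  · exact hz _ _ _ _ (by decide)
  · exact hz _ _ _ _ (by decide)
  · exact hz _ _ _ _ (by decide)
  · exact hz _ _ _ _ (by decide)
  · exact hz _ _ _ _ (by decide)
  · exact hz _ _ _ _ (by decide)
  · exact hz _ _ _ _ (by decide)
  · exact hz _ _ _ _ (by decide)
  · exact hz _ _ _ _ (by decide)
  · exact hz _ _ _ _ (by decide)
  · exact hz _ _ _ _ (by decide)
  · exact hz _ _ _ _ (by decide)
  · exact hz _ _ _ _ (by decide)
  · exact hz _ _ _ _ (by decide)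
  · exact hz _ _ _ _ (by decide)
  · exact hz _ _ _ _ (by decide)
  · exact hz _ _ _ _ (by decide)
  · exact hz _ _ _ _ (by decide)
  · exact hz _ _ _ _ (by decide)
  · exact hz _ _ _ _ (by decide)
  · exact hz _ _ _ _ (by decide)
  · exact hz _ _ _ _ (by decide)
  · exact hz _ _ _ _ (by decide)
  · exact hz _ _ _ _ (by decide)
  · exact hz _ _ _ _ (by decide)
  · exact hz _ _ _ _ (by decide)
  · exact hz _ _ _ _ (by decide)
  · exact hz _ _ _ _ (by decide)
  · exact hz _ _ _ _ (by decide)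
  · exact hz _ _ _ _ (by decide)
  · exact hz _ _ _ _ (by decide)
  · exact hz _ _ _ _ (by decide)
  · exact hz _ _ _ _ (by decide)
  · exact hz _ _ _ _ (by decide)
  · exact hz _ _ _ _ (by decide)
  · exact hz _ _ _ _ (by decide)
  · exact hz _ _ _ _ (by decide)
  · exact hz _ _ _ _ (by decide)
  · exact hz _ _ _ _ (by decide)
  · exact hz _ _ _ _ (by decide)
  · exact hz _ _ _ _ (by decide)
  · exact hz _ _ _ _ (by decide)
  · exact hz _ _ _ _ (by decide)
  · exact hz _ _ _ _ (by decide)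
  · exact hz _ _ _ _ (by decide)
  · exact hz _ _ _ _ (by decide)
  · exact hz _ _ _ _ (by decide)
  · exact hz _ _ _ _ (by decide)
  · exact hz _ _ _ _ (by decide)
  · exact hz _ _ _ _ (by decide)
  · exact hz _ _ _ _ (by decide)
  · exact hz _ _ _ _ (by decide)
  · exact hz _ _ _ _ (by decide)
  · exact hz _ _ _ _ (by decide)
  · exact hz _ _ _ _ (by decide)
  · linarith [b1212]
  · linarith [b1213]
  · exact hz _ _ _ _ (by decide)
  · linarith [ha2 1 2 1 2, b1212]
  · exact hz _ _ _ _ (by decide)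
  · linarith [b1223]
  · exact hz _ _ _ _ (by decide)
  · linarith [ha2 1 2 1 3, b1213]
  · linarith [ha2 1 2 2 3, b1223]
  · exact hz _ _ _ _ (by decide)
  · exact hz _ _ _ _ (by decide)
  · exact hz _ _ _ _ (by decide)
  · exact hz _ _ _ _ (by decide)
  · exact hz _ _ _ _ (by decide)
  · exact hz _ _ _ _ (by decide)
  · exact hz _ _ _ _ (by decide)
  · linarith [hp 1 2 1 3, b1213]
  · linarith [b1313]
  · exact hz _ _ _ _ (by decide)
  · linarith [ha2 1 3 1 2, hp 1 2 1 3, b1213]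
  · exact hz _ _ _ _ (by decide)
  · linarith [b1323]
  · exact hz _ _ _ _ (by decide)
  · linarith [ha2 1 3 1 3, b1313]
  · linarith [ha2 1 3 2 3, b1323]
  · exact hz _ _ _ _ (by decide)
  · exact hz _ _ _ _ (by decide)
  · exact hz _ _ _ _ (by decide)
  · exact hz _ _ _ _ (by decide)
  · exact hz _ _ _ _ (by decide)
  · exact hz _ _ _ _ (by decide)
  · exact hz _ _ _ _ (by decide)
  · exact hz _ _ _ _ (by decide)
  · exact hz _ _ _ _ (by decide)
  · exact hz _ _ _ _ (by decide)
  · exact hz _ _ _ _ (by decide)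
  · exact hz _ _ _ _ (by decide)
  · exact hz _ _ _ _ (by decide)
  · exact hz _ _ _ _ (by decide)
  · exact hz _ _ _ _ (by decide)
  · exact hz _ _ _ _ (by decide)
  · exact hz _ _ _ _ (by decide)
  · exact hz _ _ _ _ (by decide)
  · exact hz _ _ _ _ (by decide)
  · exact hz _ _ _ _ (by decide)
  · exact hz _ _ _ _ (by decide)
  · exact hz _ _ _ _ (by decide)
  · exact hz _ _ _ _ (by decide)
  · linarith [ha1 1 2 1 2, b1212]
  · linarith [ha1 1 2 1 3, b1213]
  · exact hz _ _ _ _ (by decide)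
  · linarith [ha1 1 2 2 1, ha2 1 2 1 2, b1212]
  · exact hz _ _ _ _ (by decide)
  · linarith [ha1 1 2 2 3, b1223]
  · exact hz _ _ _ _ (by decide)
  · linarith [ha1 1 2 3 1, ha2 1 2 1 3, b1213]
  · linarith [ha1 1 2 3 2, ha2 1 2 2 3, b1223]
  · exact hz _ _ _ _ (by decide)
  · exact hz _ _ _ _ (by decide)
  · exact hz _ _ _ _ (by decide)
  · exact hz _ _ _ _ (by decide)
  · exact hz _ _ _ _ (by decide)
  · exact hz _ _ _ _ (by decide)
  · exact hz _ _ _ _ (by decide)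
  · exact hz _ _ _ _ (by decide)
  · exact hz _ _ _ _ (by decide)
  · exact hz _ _ _ _ (by decide)
  · exact hz _ _ _ _ (by decide)
  · exact hz _ _ _ _ (by decide)
  · exact hz _ _ _ _ (by decide)
  · exact hz _ _ _ _ (by decide)
  · exact hz _ _ _ _ (by decide)
  · exact hz _ _ _ _ (by decide)
  · exact hz _ _ _ _ (by decide)
  · exact hz _ _ _ _ (by decide)
  · exact hz _ _ _ _ (by decide)
  · exact hz _ _ _ _ (by decide)
  · exact hz _ _ _ _ (by decide)
  · exact hz _ _ _ _ (by decide)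
  · exact hz _ _ _ _ (by decide)
  · linarith [hp 1 2 2 3, b1223]
  · linarith [hp 1 3 2 3, b1323]
  · exact hz _ _ _ _ (by decide)
  · linarith [ha2 2 3 1 2, hp 1 2 2 3, b1223]
  · exact hz _ _ _ _ (by decide)
  · linarith [b2323]
  · exact hz _ _ _ _ (by decide)
  · linarith [ha2 2 3 1 3, hp 1 3 2 3, b1323]
  · linarith [ha2 2 3 2 3, b2323]
  · exact hz _ _ _ _ (by decide)
  · exact hz _ _ _ _ (by decide)
  · exact hz _ _ _ _ (by decide)
  · exact hz _ _ _ _ (by decide)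
  · exact hz _ _ _ _ (by decide)
  · exact hz _ _ _ _ (by decide)
  · exact hz _ _ _ _ (by decide)
  · exact hz _ _ _ _ (by decide)
  · exact hz _ _ _ _ (by decide)
  · exact hz _ _ _ _ (by decide)
  · exact hz _ _ _ _ (by decide)
  · exact hz _ _ _ _ (by decide)
  · exact hz _ _ _ _ (by decide)
  · exact hz _ _ _ _ (by decide)
  · exact hz _ _ _ _ (by decide)
  · exact hz _ _ _ _ (by decide)
  · exact hz _ _ _ _ (by decide)
  · exact hz _ _ _ _ (by decide)
  · exact hz _ _ _ _ (by decide)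
  · exact hz _ _ _ _ (by decide)
  · exact hz _ _ _ _ (by decide)
  · exact hz _ _ _ _ (by decide)
  · exact hz _ _ _ _ (by decide)
  · linarith [ha1 1 3 1 2, hp 1 2 1 3, b1213]
  · linarith [ha1 1 3 1 3, b1313]
  · exact hz _ _ _ _ (by decide)
  · linarith [ha1 1 3 2 1, ha2 1 3 1 2, hp 1 2 1 3, b1213]
  · exact hz _ _ _ _ (by decide)
  · linarith [ha1 1 3 2 3, b1323]
  · exact hz _ _ _ _ (by decide)
  · linarith [ha1 1 3 3 1, ha2 1 3 1 3, b1313]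
  · linarith [ha1 1 3 3 2, ha2 1 3 2 3, b1323]
  · exact hz _ _ _ _ (by decide)
  · exact hz _ _ _ _ (by decide)
  · exact hz _ _ _ _ (by decide)
  · exact hz _ _ _ _ (by decide)
  · exact hz _ _ _ _ (by decide)
  · exact hz _ _ _ _ (by decide)
  · exact hz _ _ _ _ (by decide)
  · linarith [ha1 2 3 1 2, hp 1 2 2 3, b1223]
  · linarith [ha1 2 3 1 3, hp 1 3 2 3, b1323]
  · exact hz _ _ _ _ (by decide)
  · linarith [ha1 2 3 2 1, ha2 2 3 1 2, hp 1 2 2 3, b1223]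
  · exact hz _ _ _ _ (by decide)
  · linarith [ha1 2 3 2 3, b2323]
  · exact hz _ _ _ _ (by decide)
  · linarith [ha1 2 3 3 1, ha2 2 3 1 3, hp 1 3 2 3, b1323]
  · linarith [ha1 2 3 3 2, ha2 2 3 2 3, b2323]
  · exact hz _ _ _ _ (by decide)
  · exact hz _ _ _ _ (by decide)
  · exact hz _ _ _ _ (by decide)
  · exact hz _ _ _ _ (by decide)
  · exact hz _ _ _ _ (by decide)
  · exact hz _ _ _ _ (by decide)
  · exact hz _ _ _ _ (by decide)
  · exact hz _ _ _ _ (by decide)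
  · exact hz _ _ _ _ (by decide)
  · exact hz _ _ _ _ (by decide)
  · exact hz _ _ _ _ (by decide)
  · exact hz _ _ _ _ (by decide)
  · exact hz _ _ _ _ (by decide)
  · exact hz _ _ _ _ (by decide)
  · exact hz _ _ _ _ (by decide)
  · exact hz _ _ _ _ (by decide)
  · exact hz _ _ _ _ (by decide)

section Frame
variable (G : GeomData 4 M) (p : M) (e : Fin 4 → Fin 4 → ℝ)

/-- The components of the Weyl tensor in the frame `e`. -/
def myWfr (i j k l : Fin 4) : ℝ :=
  ∑ a, ∑ b, ∑ c, ∑ d, e i a * e j b * e k c * e l d * G.Weyl p a b c d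

lemma myWfr_antisym₁ (i j k l : Fin 4) :
    myWfr G p e j i k l = - myWfr G p e i j k l := by
  unfold myWfr
  conv_lhs => rw [Finset.sum_comm]
  simp only [← Finset.sum_neg_distrib]
  refine Finset.sum_congr rfl fun b _ => Finset.sum_congr rfl fun a _ =>
    Finset.sum_congr rfl fun c _ => Finset.sum_congr rfl fun d _ => ?_
  linear_combination (e i b * e j a * e k c * e l d) * myWeyl_antisym₁ G p b a c d

lemma myWfr_antisym₂ (i j k l : Fin 4) :
    myWfr G p e i j l k = - myWfr G p e i j k l := by
  unfold myWfr
  conv_lhs => enter [2, a, 2, b]; rw [Finset.sum_comm]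
  simp only [← Finset.sum_neg_distrib]
  refine Finset.sum_congr rfl fun a _ => Finset.sum_congr rfl fun b _ =>
    Finset.sum_congr rfl fun x _ => Finset.sum_congr rfl fun y _ => ?_
  linear_combination (e i a * e j b * e k x * e l y) * myWeyl_antisym₂ G p a b x y

lemma myWfr_pairSym (i j k l : Fin 4) :
    myWfr G p e k l i j = myWfr G p e i j k l := by
  unfold myWfr
  conv_lhs => enter [2, a]; rw [Finset.sum_comm]
  conv_lhs => rw [Finset.sum_comm]
  conv_lhs => enter [2, c, 2, a]; rw [Finset.sum_comm]
  conv_lhs => enter [2, c]; rw [Finset.sum_comm]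
  refine Finset.sum_congr rfl fun u _ => Finset.sum_congr rfl fun v _ =>
    Finset.sum_congr rfl fun w _ => Finset.sum_congr rfl fun z _ => ?_
  linear_combination (e i u * e j v * e k w * e l z) * myWeyl_pairSym G p u v w z

lemma myWfr_trace (he' : ∀ a b : Fin 4, (∑ i, e i a * e i b) = gK a b) (k l : Fin 4) :
    ∑ i, myWfr G p e i k i l = 0 := by
  unfold myWfr
  conv_lhs => rw [Finset.sum_comm]
  conv_lhs => enter [2, a]; rw [Finset.sum_comm]
  conv_lhs => enter [2, a, 2, b]; rw [Finset.sum_comm]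
  have key : ∀ a b c, (∑ i, ∑ d, e i a * e k b * e i c * e l d * G.Weyl p a b c d)
      = gK a c * ∑ d, e k b * e l d * G.Weyl p a b c d := by
    intro a b c
    rw [← he' a c, Finset.sum_mul]
    refine Finset.sum_congr rfl fun i _ => ?_
    rw [Finset.mul_sum]
    exact Finset.sum_congr rfl fun d _ => by ring
  rw [Finset.sum_congr rfl fun a _ => Finset.sum_congr rfl fun b _ =>
    Finset.sum_congr rfl fun c _ => key a b c]
  have step2 : ∀ a b, (∑ c, gK a c * ∑ d, e k b * e l d * G.Weyl p a b c d)
      = ∑ d, e k b * e l d * G.Weyl p a b a d := by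
    intro a b; simp [gK, ite_mul]
  rw [Finset.sum_congr rfl fun a _ => Finset.sum_congr rfl fun b _ => step2 a b]
  conv_lhs => rw [Finset.sum_comm]
  conv_lhs => enter [2, b]; rw [Finset.sum_comm]
  refine Finset.sum_eq_zero fun b _ => Finset.sum_eq_zero fun d _ => ?_
  rw [← Finset.mul_sum, myWeyl_trace G p b d, mul_zero]

/-- Contracting an orthonormal expansion recovers the original components. -/
lemma myInv (he' : ∀ a b : Fin 4, (∑ i, e i a * e i b) = gK a b)
    (v : Fin 4 → ℝ) (a : Fin 4) :
    (∑ i, e i a * ∑ x, e i x * v x) = v a := by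
  have h1 : ∀ i, e i a * (∑ x, e i x * v x) = ∑ x, e i a * e i x * v x := by
    intro i; rw [Finset.mul_sum]; exact Finset.sum_congr rfl fun x _ => by ring
  have h2 : ∀ x, (∑ i, e i a * e i x * v x) = gK a x * v x := by
    intro x; rw [← he' a x, Finset.sum_mul]
  rw [Finset.sum_congr rfl fun i _ => h1 i, Finset.sum_comm,
    Finset.sum_congr rfl fun x _ => h2 x]
  simp [gK, ite_mul]

def myA3 (a b c l : Fin 4) : ℝ := ∑ z, e l z * G.Weyl p a b c z
def myA2 (a b k l : Fin 4) : ℝ := ∑ y, e k y * myA3 G p e a b y l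
def myA1 (a j k l : Fin 4) : ℝ := ∑ x, e j x * myA2 G p e a x k l

lemma myA0_eq (i j k l : Fin 4) :
    (∑ w, e i w * myA1 G p e w j k l) = myWfr G p e i j k l := by
  unfold myWfr myA1 myA2 myA3
  simp only [Finset.mul_sum]
  refine Finset.sum_congr rfl fun w _ => Finset.sum_congr rfl fun x _ =>
    Finset.sum_congr rfl fun y _ => Finset.sum_congr rfl fun z _ => by ring

lemma myFinal (he' : ∀ a b : Fin 4, (∑ i, e i a * e i b) = gK a b)
    (hz : ∀ i j k l, myWfr G p e i j k l = 0) :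
    ∀ a b c d : Fin 4, G.Weyl p a b c d = 0 := by
  have hA1 : ∀ a j k l, myA1 G p e a j k l = 0 := by
    intro a j k l
    calc myA1 G p e a j k l
        = ∑ i, e i a * ∑ x, e i x * myA1 G p e x j k l :=
          (myInv e he' (fun w => myA1 G p e w j k l) a).symm
      _ = ∑ i, e i a * myWfr G p e i j k l := by
          refine Finset.sum_congr rfl fun i _ => ?_
          rw [myA0_eq G p e i j k l]
      _ = 0 := by simp [hz]
  have hA2 : ∀ a b k l, myA2 G p e a b k l = 0 := by
    intro a b k l
    calc myA2 G p e a b k l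
        = ∑ j, e j b * ∑ x, e j x * myA2 G p e a x k l :=
          (myInv e he' (fun x => myA2 G p e a x k l) b).symm
      _ = ∑ j, e j b * myA1 G p e a j k l :=
          Finset.sum_congr rfl fun j _ => rfl
      _ = 0 := by simp [hA1]
  have hA3 : ∀ a b c l, myA3 G p e a b c l = 0 := by
    intro a b c l
    calc myA3 G p e a b c l
        = ∑ k, e k c * ∑ y, e k y * myA3 G p e a b y l :=
          (myInv e he' (fun y => myA3 G p e a b y l) c).symm
      _ = ∑ k, e k c * myA2 G p e a b k l :=
          Finset.sum_congr rfl fun k _ => rfl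
      _ = 0 := by simp [hA2]
  intro a b c d
  calc G.Weyl p a b c d
      = ∑ l, e l d * ∑ z, e l z * G.Weyl p a b c z :=
        (myInv e he' (fun z => G.Weyl p a b c z) d).symm
    _ = ∑ l, e l d * myA3 G p e a b c l :=
        Finset.sum_congr rfl fun l _ => rfl
    _ = 0 := by simp [hA3]

end Frame

end WeylAux

/-- Let `(M⁴, g)` be a 4-dimensional Riemannian manifold and
`p` a point at which, for some orthonormal frame `{e₁, e₂, e₃, e₄}`, the Weyl
tensor satisfies `W(e_i, e_j, e_k, e₁) = 0` for all `i, j, k`. Then `W` vanishes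
entirely at `p`. (The frame is encoded by its component matrix `e`, with `e 0`
playing the role of `e₁`.) -/
theorem weyl_vanishes_of_frame_contraction {M : Type*} (G : GeomData 4 M)
    (p : M) (e : Fin 4 → Fin 4 → ℝ)
    (he : ∀ i j : Fin 4, (∑ k, e i k * e j k) = gK i j)
    (hW : ∀ i j k : Fin 4,
      (∑ a, ∑ b, ∑ c, ∑ d,
        e i a * e j b * e k c * e 0 d * G.Weyl p a b c d) = 0) :
    ∀ a b c d : Fin 4, G.Weyl p a b c d = 0 := by
  have he' : ∀ a b : Fin 4, (∑ i, e i a * e i b) = gK a b := by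
    have h1 : (Matrix.of e) * Matrix.transpose (Matrix.of e) = 1 := by
      ext i j
      simpa [Matrix.mul_apply, Matrix.one_apply, gK] using he i j
    have h2 : Matrix.transpose (Matrix.of e) * (Matrix.of e) = 1 := mul_eq_one_comm.mp h1
    intro a b
    have h3 := congrFun (congrFun h2 a) b
    simpa [Matrix.mul_apply, Matrix.one_apply, gK, mul_comm] using h3
  have h0 : ∀ i j k : Fin 4, myWfr G p e i j k 0 = 0 := fun i j k => hW i j k
  have ht : ∀ k l : Fin 4, myWfr G p e 0 k 0 l + myWfr G p e 1 k 1 l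
      + myWfr G p e 2 k 2 l + myWfr G p e 3 k 3 l = 0 := by
    intro k l
    have h := myWfr_trace G p e he' k l
    rwa [Fin.sum_univ_four] at h
  have hz := weyl_core_algebra (fun i j k l => myWfr G p e i j k l)
    (fun i j k l => myWfr_antisym₁ G p e i j k l)
    (fun i j k l => myWfr_antisym₂ G p e i j k l)
    (fun i j k l => myWfr_pairSym G p e i j k l) ht h0
  exact myFinal G p e he' hz
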